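/- Let Ω = (0,1)² be the open unit square in ℝ² and let g be continuous on Ω̄ = [0,1]². If y is continuous on Ω̄, twice continuously differentiable in Ω, and satisfies −Δy = g in Ω and y = 0 on the boundary of the square, then max_{x∈Ω̄}|y(x)| ≤ (1/8)·max_{x∈Ω̄}|g(x)|. -/

import Mathlib

/-!
At an interior local maximum of a `C²` function, the restriction to every line through the point
has nonpositive second derivative, so `Δu ≤ 0` there; hence a function with `Δu > 0` on a bounded
open set attains its maximum on the frontier. If `-Δw ≤ M` and `w = 0` on the frontier, the
comparison function `w + a |p - c|²` with `a > M / 4` has positive Laplacian, so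
`w ≤ a · max |p - c|²`. On the unit square `|p - (1/2, 1/2)|² ≤ 1/2`, which gives `y ≤ M / 8`;
the same bound for `-y` finishes the proof.
-/

/-- The Laplace operator on `ℝ²` (realized as `ℝ × ℝ`):
`Δ f x = ∂²f/∂x₁² (x) + ∂²f/∂x₂² (x)`. -/
noncomputable def lap2 (f : ℝ × ℝ → ℝ) (x : ℝ × ℝ) : ℝ :=
  fderiv ℝ (fun p => fderiv ℝ f p ((1 : ℝ), (0 : ℝ))) x ((1 : ℝ), (0 : ℝ)) +
  fderiv ℝ (fun p => fderiv ℝ f p ((0 : ℝ), (1 : ℝ))) x ((0 : ℝ), (1 : ℝ))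

/-- `max_{x ∈ S} |y x|` (as a supremum). -/
noncomputable def supNorm {α : Type*} (S : Set α) (y : α → ℝ) : ℝ :=
  sSup ((fun x => |y x|) '' S)

/-- The open unit square `Ω = (0,1)²`. -/
def unitSq : Set (ℝ × ℝ) := Set.Ioo (0 : ℝ) 1 ×ˢ Set.Ioo (0 : ℝ) 1

/-- The closed unit square `Ω̄ = [0,1]²`. -/
def unitSqCl : Set (ℝ × ℝ) := Set.Icc (0 : ℝ) 1 ×ˢ Set.Icc (0 : ℝ) 1

open Filter Topology Set

theorem IsLocalMax.deriv_deriv_nonpos {f : ℝ → ℝ} {x₀ : ℝ} (h : IsLocalMax f x₀)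
    (hc : ContinuousAt f x₀) : deriv (deriv f) x₀ ≤ 0 := by
  by_contra! hpos
  -- a positive second derivative would make `x₀` a local minimum as well, so `f` is locally
  -- constant near `x₀`
  have hconst : f =ᶠ[𝓝 x₀] fun _ => f x₀ :=
    eventuallyEq_of_isMinFilter_of_isMaxFilter
      (isLocalMin_of_deriv_deriv_pos hpos h.deriv_eq_zero hc) h
  have hzero : deriv (deriv f) x₀ = 0 := by
    rw [hconst.deriv.deriv_eq]
    simp
  exact hpos.ne' hzero

section SecondDirectionalDerivative

variable {E : Type*} [NormedAddCommGroup E] [NormedSpace ℝ E]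

theorem ContDiffAt.differentiableAt_fderiv_apply {u : E → ℝ} {x : E} (hu : ContDiffAt ℝ 2 u x)
    (e : E) : DifferentiableAt ℝ (fun p => fderiv ℝ u p e) x :=
  ((hu.fderiv_right (m := 1) (by norm_num)).differentiableAt one_ne_zero).clm_apply
    (differentiableAt_const e)

theorem IsLocalMax.fderiv_fderiv_apply_nonpos {u : E → ℝ} {x₀ : E} (h : IsLocalMax u x₀)
    (hu : ContDiffAt ℝ 2 u x₀) (e : E) : fderiv ℝ (fun p => fderiv ℝ u p e) x₀ e ≤ 0 := by
  set L : ℝ → E := fun t => x₀ + t • e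
  have hL : ∀ t, HasDerivAt L e t := fun t => by
    convert ((hasDerivAt_id t).smul_const e).const_add x₀ using 1 <;> simp [L]
  have hL0 : x₀ = L 0 := by simp [L]
  have hLt : Tendsto L (𝓝 0) (𝓝 x₀) := hL0 ▸ (hL 0).continuousAt.tendsto
  have hderiv : deriv (u ∘ L) =ᶠ[𝓝 0] (fun p => fderiv ℝ u p e) ∘ L := by
    filter_upwards [hLt.eventually (hu.eventually (by simp))] with t ht
    exact ((ht.differentiableAt two_ne_zero).hasFDerivAt.comp_hasDerivAt t (hL t)).deriv
  have hsecond : deriv (deriv (u ∘ L)) 0 = fderiv ℝ (fun p => fderiv ℝ u p e) x₀ e := by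
    rw [hderiv.deriv_eq]
    exact ((hu.differentiableAt_fderiv_apply e).hasFDerivAt.comp_hasDerivAt_of_eq 0 (hL 0)
      hL0).deriv
  rw [hL0] at h hu
  exact hsecond ▸ (h.comp_continuous (hL 0).continuousAt).deriv_deriv_nonpos
    (hu.continuousAt.comp (hL 0).continuousAt)

end SecondDirectionalDerivative

theorem lap2_nonpos_of_isLocalMax {u : ℝ × ℝ → ℝ} {x : ℝ × ℝ} (h : IsLocalMax u x)
    (hu : ContDiffAt ℝ 2 u x) : lap2 u x ≤ 0 :=
  add_nonpos (h.fderiv_fderiv_apply_nonpos hu _) (h.fderiv_fderiv_apply_nonpos hu _)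

theorem lap2_add {f g : ℝ × ℝ → ℝ} {x : ℝ × ℝ} (hf : ContDiffAt ℝ 2 f x)
    (hg : ContDiffAt ℝ 2 g x) : lap2 (f + g) x = lap2 f x + lap2 g x := by
  have key : ∀ e, fderiv ℝ (fun p => fderiv ℝ (f + g) p e) x e
      = fderiv ℝ (fun p => fderiv ℝ f p e) x e + fderiv ℝ (fun p => fderiv ℝ g p e) x e := by
    intro e
    have hsum : (fun p => fderiv ℝ (f + g) p e)
        =ᶠ[𝓝 x] (fun p => fderiv ℝ f p e) + (fun p => fderiv ℝ g p e) := by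
      filter_upwards [hf.eventually (by simp), hg.eventually (by simp)] with p hfp hgp
      simp [fderiv_add (hfp.differentiableAt two_ne_zero) (hgp.differentiableAt two_ne_zero)]
    rw [hsum.fderiv_eq, fderiv_add (hf.differentiableAt_fderiv_apply e)
      (hg.differentiableAt_fderiv_apply e)]
    rfl
  simp only [lap2, key]
  ring

theorem lap2_const_smul (c : ℝ) (f : ℝ × ℝ → ℝ) (x : ℝ × ℝ) :
    lap2 (c • f) x = c * lap2 f x := by
  have key : ∀ e, (fun p => fderiv ℝ (c • f) p e) = c • fun p => fderiv ℝ f p e := by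
    intro e
    ext p
    simp [fderiv_const_smul_field]
  rw [lap2, lap2, key, key, fderiv_const_smul_field, fderiv_const_smul_field]
  simp [mul_add]

theorem lap2_neg (f : ℝ × ℝ → ℝ) (x : ℝ × ℝ) : lap2 (-f) x = -lap2 f x := by
  simpa using lap2_const_smul (-1) f x

/-- The squared Euclidean distance `|p - c|²` (the norm of `ℝ × ℝ` is the sup norm). -/
def sqDist (c p : ℝ × ℝ) : ℝ := (p.1 - c.1) ^ 2 + (p.2 - c.2) ^ 2

theorem contDiff_sqDist (c : ℝ × ℝ) : ContDiff ℝ 2 (sqDist c) := by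
  unfold sqDist
  fun_prop

theorem hasFDerivAt_sqDist (c p : ℝ × ℝ) :
    HasFDerivAt (sqDist c) ((2 * (p.1 - c.1)) • ContinuousLinearMap.fst ℝ ℝ ℝ
      + (2 * (p.2 - c.2)) • ContinuousLinearMap.snd ℝ ℝ ℝ) p := by
  have h1 := ((hasFDerivAt_fst (𝕜 := ℝ) (p := p)).sub_const c.1).pow 2
  have h2 := ((hasFDerivAt_snd (𝕜 := ℝ) (p := p)).sub_const c.2).pow 2
  exact (h1.add h2).congr_fderiv (by ext <;> simp)

theorem lap2_sqDist (c x : ℝ × ℝ) : lap2 (sqDist c) x = 4 := by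
  have key : ∀ e : ℝ × ℝ,
      fderiv ℝ (fun p => fderiv ℝ (sqDist c) p e) x e = 2 * e.1 ^ 2 + 2 * e.2 ^ 2 := by
    intro e
    have h : HasFDerivAt (fun p : ℝ × ℝ => 2 * (p.1 - c.1) * e.1 + 2 * (p.2 - c.2) * e.2)
        ((2 * e.1) • ContinuousLinearMap.fst ℝ ℝ ℝ + (2 * e.2) • ContinuousLinearMap.snd ℝ ℝ ℝ) x :=
      (((((hasFDerivAt_fst (𝕜 := ℝ)).sub_const c.1).const_mul 2).mul_const e.1).add
        ((((hasFDerivAt_snd (𝕜 := ℝ)).sub_const c.2).const_mul 2).mul_const e.2)).congr_fderiv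
        (by ext <;> simp [mul_comm])
    simp only [(hasFDerivAt_sqDist c _).fderiv]
    simp [h.fderiv]
    ring
  simp only [lap2, key]
  norm_num

section BoundedOpenSet

variable {U : Set (ℝ × ℝ)} (hU : IsOpen U) (hUb : Bornology.IsBounded U)
include hU hUb

theorem le_of_lap2_pos_of_frontier_le {u : ℝ × ℝ → ℝ} {B : ℝ}
    (huc : ContinuousOn u (closure U)) (hu : ContDiffOn ℝ 2 u U)
    (hpos : ∀ x ∈ U, 0 < lap2 u x) (hB : ∀ x ∈ frontier U, u x ≤ B)
    {x : ℝ × ℝ} (hx : x ∈ closure U) : u x ≤ B := by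
  obtain ⟨x₀, hx₀, hmax⟩ := hUb.isCompact_closure.exists_isMaxOn ⟨x, hx⟩ huc
  by_cases hin : x₀ ∈ U
  · have hloc : IsLocalMax u x₀ :=
      hmax.isLocalMax (mem_of_superset (hU.mem_nhds hin) subset_closure)
    exact absurd (lap2_nonpos_of_isLocalMax hloc (hu.contDiffAt (hU.mem_nhds hin)))
      (hpos x₀ hin).not_ge
  · exact (hmax hx).trans (hB x₀ ⟨hx₀, by rwa [hU.interior_eq]⟩)

variable {c : ℝ × ℝ} {R : ℝ} (hR : ∀ x ∈ closure U, sqDist c x ≤ R)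
include hR

theorem le_of_neg_lap2_le {M : ℝ} (hM : 0 ≤ M) {w : ℝ × ℝ → ℝ}
    (hwc : ContinuousOn w (closure U)) (hw : ContDiffOn ℝ 2 w U)
    (hlap : ∀ x ∈ U, -lap2 w x ≤ M) (hbv : ∀ x ∈ frontier U, w x = 0)
    {x : ℝ × ℝ} (hx : x ∈ closure U) : w x ≤ M / 4 * R := by
  have hcomparison : ∀ a, M / 4 < a → w x ≤ a * R := by
    intro a ha
    have hparab : ContDiff ℝ 2 (a • sqDist c) := (contDiff_sqDist c).const_smul a
    have hu : ContDiffOn ℝ 2 (w + a • sqDist c) U := hw.add hparab.contDiffOn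
    have hpos : ∀ z ∈ U, 0 < lap2 (w + a • sqDist c) z := by
      intro z hz
      rw [lap2_add (hw.contDiffAt (hU.mem_nhds hz)) hparab.contDiffAt,
        lap2_const_smul, lap2_sqDist]
      linarith [hlap z hz]
    have hB : ∀ z ∈ frontier U, (w + a • sqDist c) z ≤ a * R := by
      intro z hz
      simpa [hbv z hz] using
        mul_le_mul_of_nonneg_left (hR z (frontier_subset_closure hz)) (by linarith)
    have hmax := le_of_lap2_pos_of_frontier_le hU hUb
      (hwc.add hparab.continuous.continuousOn) hu hpos hB hx
    have hparab_nonneg : 0 ≤ a * sqDist c x :=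
      mul_nonneg (by linarith) (by unfold sqDist; positivity)
    simp only [Pi.add_apply, Pi.smul_apply, smul_eq_mul] at hmax
    linarith
  have hlim : Tendsto (fun a => a * R) (𝓝[>] (M / 4)) (𝓝 (M / 4 * R)) :=
    ((continuous_id.mul continuous_const).tendsto _).mono_left nhdsWithin_le_nhds
  exact ge_of_tendsto hlim (eventually_nhdsWithin_of_forall hcomparison)

theorem abs_le_of_abs_lap2_le {M : ℝ} {w : ℝ × ℝ → ℝ}
    (hwc : ContinuousOn w (closure U)) (hw : ContDiffOn ℝ 2 w U)
    (hlap : ∀ x ∈ U, |lap2 w x| ≤ M) (hbv : ∀ x ∈ frontier U, w x = 0)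
    {x : ℝ × ℝ} (hx : x ∈ closure U) : |w x| ≤ M / 4 * R := by
  obtain ⟨z, hz⟩ := closure_nonempty_iff.mp ⟨x, hx⟩
  have hM : 0 ≤ M := (abs_nonneg _).trans (hlap z hz)
  refine abs_le.mpr ⟨?_, ?_⟩
  · have hneg := le_of_neg_lap2_le hU hUb hR hM hwc.neg hw.neg
      (fun z hz => by simpa [lap2_neg] using (le_abs_self _).trans (hlap z hz))
      (fun z hz => by simp [hbv z hz]) hx
    simp only [Pi.neg_apply] at hneg
    linarith
  · exact le_of_neg_lap2_le hU hUb hR hM hwc hw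
      (fun z hz => (neg_le_abs _).trans (hlap z hz)) hbv hx

end BoundedOpenSet

theorem abs_le_supNorm {α : Type*} [TopologicalSpace α] {S : Set α} {g : α → ℝ}
    (hS : IsCompact S) (hg : ContinuousOn g S) {x : α} (hx : x ∈ S) : |g x| ≤ supNorm S g :=
  le_csSup (hS.image_of_continuousOn hg.abs).bddAbove (mem_image_of_mem _ hx)

theorem supNorm_le {α : Type*} {S : Set α} {y : α → ℝ} {B : ℝ} (hB : 0 ≤ B)
    (h : ∀ x ∈ S, |y x| ≤ B) : supNorm S y ≤ B :=
  Real.sSup_le (forall_mem_image.2 h) hB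

theorem isOpen_unitSq : IsOpen unitSq := isOpen_Ioo.prod isOpen_Ioo

theorem isBounded_unitSq : Bornology.IsBounded unitSq :=
  (Metric.isBounded_Ioo 0 1).prod (Metric.isBounded_Ioo 0 1)

theorem closure_unitSq : closure unitSq = unitSqCl := by
  rw [unitSq, unitSqCl, closure_prod_eq, closure_Ioo zero_ne_one]

theorem isCompact_unitSqCl : IsCompact unitSqCl := isCompact_Icc.prod isCompact_Icc

theorem sqDist_le_of_mem_unitSqCl {p : ℝ × ℝ} (hp : p ∈ unitSqCl) :
    sqDist (1 / 2, 1 / 2) p ≤ 1 / 2 := by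
  obtain ⟨⟨h1, h2⟩, h3, h4⟩ := hp
  simp only [sqDist]
  nlinarith

/-- Let `Ω = (0,1)²` be the open unit square and `g` continuous on
`Ω̄ = [0,1]²`.  If `y` is continuous on `Ω̄`, twice continuously differentiable in `Ω`,
satisfies `−Δy = g` in `Ω` and `y = 0` on the boundary of the square, then
`max_{x∈Ω̄} |y x| ≤ (1/8) · max_{x∈Ω̄} |g x|`. -/
theorem statement1 (g y : ℝ × ℝ → ℝ)
    (hg : ContinuousOn g unitSqCl)
    (hyc : ContinuousOn y unitSqCl)
    (hy2 : ContDiffOn ℝ 2 y unitSq)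
    (heq : ∀ x ∈ unitSq, -(lap2 y x) = g x)
    (hbv : ∀ x ∈ frontier unitSq, y x = 0) :
    supNorm unitSqCl y ≤ (1 / 8) * supNorm unitSqCl g := by
  set M := supNorm unitSqCl g
  have hlap : ∀ x ∈ unitSq, |lap2 y x| ≤ M := fun x hx => by
    rw [← abs_neg, heq x hx]
    exact abs_le_supNorm isCompact_unitSqCl hg (closure_unitSq ▸ subset_closure hx)
  have hM : 0 ≤ M := (abs_nonneg _).trans
    (abs_le_supNorm isCompact_unitSqCl hg (show ((0 : ℝ), (0 : ℝ)) ∈ unitSqCl by simp [unitSqCl]))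
  rw [← closure_unitSq] at hyc
  have hbound : ∀ x ∈ unitSqCl, |y x| ≤ M / 4 * (1 / 2) := fun x hx =>
    abs_le_of_abs_lap2_le isOpen_unitSq isBounded_unitSq
      (fun p hp => sqDist_le_of_mem_unitSqCl (closure_unitSq ▸ hp)) hyc hy2 hlap hbv
      (closure_unitSq ▸ hx)
  calc supNorm unitSqCl y ≤ M / 4 * (1 / 2) := supNorm_le (by positivity) hbound
    _ = 1 / 8 * M := by ring
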